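/- (Lemma 3.4) Let β ∈ ℝ be such that every z ∈ S_β^opt all of whose blocks are extreme points of the corresponding Ω_i^+ belongs to S^opt. Let ẑ = (x̂_1,…,x̂_n) ∈ S_β^opt and suppose there is exactly one index i ∈ {1,…,n} such that x̂_i is not an extreme point of Ω_i^+ (so x̂_j is an extreme point of Ω_j^+ for every j ≠ i). Then ẑ ∈ S^opt. -/

import Mathlib

/-!
By Krein–Milman, `Ω_i` is the convex hull of its finitely many extreme points, so
`x̂_i = ∑ w_k e_k` with extreme points `e_k`. As `f_β` is affine in the block `i` and `ẑ`
minimizes it, replacing `x̂_i` by any `e_k` with `w_k ≠ 0` gives another minimizer of `f_β`, now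
with all blocks extreme, hence a point of `S^opt`. So every such `e_k` is orthogonal to the other
blocks, hence so is `x̂_i`: `ẑ` is feasible, and a feasible minimizer of `f_β` is optimal for (P).
-/

noncomputable section

/-- Dot product on `ℝ^m`. -/
def dotp {m : ℕ} (x y : Fin m → ℝ) : ℝ := ∑ k, x k * y k

/-- The ℓ₁ penalty term `p(z) = Σ_{i<j} ⟨x_i, x_j⟩`. -/
def pen {n m : ℕ} (z : Fin n → Fin m → ℝ) : ℝ :=
  ∑ i : Fin n, ∑ j : Fin n, if i < j then dotp (z i) (z j) else 0

/-- `f` is multi-affine: affine in each block when the others are fixed. -/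
def MultiAffine {n m : ℕ} (f : (Fin n → Fin m → ℝ) → ℝ) : Prop :=
  ∀ (i : Fin n) (z : Fin n → Fin m → ℝ) (x y : Fin m → ℝ) (t : ℝ),
    f (Function.update z i (t • x + (1 - t) • y)) =
      t * f (Function.update z i x) + (1 - t) * f (Function.update z i y)

/-- Membership in `Ω = Ω₁⁺ × ⋯ × Ωₙ⁺`. -/
def InOmega {n m : ℕ} (Om : Fin n → Set (Fin m → ℝ)) (z : Fin n → Fin m → ℝ) : Prop :=
  ∀ i, z i ∈ Om i

/-- Feasibility for (P): `z ∈ Ω` and `⟨x_i, x_j⟩ = 0` for all `i ≠ j`. -/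
def Feas {n m : ℕ} (Om : Fin n → Set (Fin m → ℝ)) (z : Fin n → Fin m → ℝ) : Prop :=
  InOmega Om z ∧ ∀ i j, i ≠ j → dotp (z i) (z j) = 0

/-- `S^opt`: global minimizers of `f` over the feasible region of (P). -/
def SOpt {n m : ℕ} (Om : Fin n → Set (Fin m → ℝ)) (f : (Fin n → Fin m → ℝ) → ℝ) :
    Set (Fin n → Fin m → ℝ) :=
  {z | Feas Om z ∧ ∀ w, Feas Om w → f z ≤ f w}

/-- `S_β^opt`: global minimizers of `f_β = f + β p` over `Ω`. -/
def SBeta {n m : ℕ} (Om : Fin n → Set (Fin m → ℝ)) (f : (Fin n → Fin m → ℝ) → ℝ) (β : ℝ) :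
    Set (Fin n → Fin m → ℝ) :=
  {z | InOmega Om z ∧ ∀ w, InOmega Om w → f z + β * pen z ≤ f w + β * pen w}

open Finset Function

theorem convexHull_extremePoints_eq_of_finite {E : Type*} [AddCommGroup E] [Module ℝ E]
    [TopologicalSpace E] [T2Space E] [IsTopologicalAddGroup E] [ContinuousSMul ℝ E]
    [LocallyConvexSpace ℝ E] {s : Set E} (hs : IsCompact s) (hconv : Convex ℝ s)
    (hfin : (s.extremePoints ℝ).Finite) : convexHull ℝ (s.extremePoints ℝ) = s := by
  simpa only [(hfin.isClosed_convexHull ℝ).closure_eq] using closure_convexHull_extremePoints hs hconv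

theorem Finset.eq_of_sum_mul_eq_of_le {ι : Type*} {s : Finset ι} {w c : ι → ℝ} {a : ℝ}
    (hw₀ : ∀ k ∈ s, 0 ≤ w k) (hw₁ : ∑ k ∈ s, w k = 1) (hle : ∀ k ∈ s, a ≤ c k)
    (hsum : ∑ k ∈ s, w k * c k = a) {k : ι} (hk : k ∈ s) (hwk : w k ≠ 0) : c k = a := by
  have hgap : ∑ k ∈ s, w k * (c k - a) = 0 := by
    simp only [mul_sub, sum_sub_distrib, ← sum_mul, hw₁, hsum, one_mul, sub_self]
  have hterm := (sum_eq_zero_iff_of_nonneg fun k hk ↦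
    mul_nonneg (hw₀ k hk) (sub_nonneg.2 (hle k hk))).1 hgap k hk
  linarith [(mul_eq_zero.1 hterm).resolve_left hwk]

section

variable {E : Type*} [AddCommGroup E] [Module ℝ E]

def AffineOnLines (φ : E → ℝ) : Prop :=
  ∀ x y : E, ∀ t : ℝ, φ (t • x + (1 - t) • y) = t * φ x + (1 - t) * φ y

namespace AffineOnLines

variable {φ ψ : E → ℝ}

theorem add (hφ : AffineOnLines φ) (hψ : AffineOnLines ψ) : AffineOnLines (φ + ψ) := by
  intro x y t
  simp only [Pi.add_apply, hφ x y t, hψ x y t]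
  ring

theorem const_mul (hφ : AffineOnLines φ) (c : ℝ) : AffineOnLines (fun x ↦ c * φ x) := by
  intro x y t
  simp only [hφ x y t]
  ring

theorem convexOn (hφ : AffineOnLines φ) : ConvexOn ℝ Set.univ φ := by
  refine ⟨convex_univ, fun x _ y _ a b _ _ hab ↦ ?_⟩
  obtain rfl : b = 1 - a := by linarith
  exact (hφ x y a).le

theorem concaveOn (hφ : AffineOnLines φ) : ConcaveOn ℝ Set.univ φ := by
  refine ⟨convex_univ, fun x _ y _ a b _ _ hab ↦ ?_⟩
  obtain rfl : b = 1 - a := by linarith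
  exact (hφ x y a).ge

theorem map_sum {ι : Type*} (hφ : AffineOnLines φ) {s : Finset ι} {w : ι → ℝ} {p : ι → E}
    (hw₀ : ∀ k ∈ s, 0 ≤ w k) (hw₁ : ∑ k ∈ s, w k = 1) :
    φ (∑ k ∈ s, w k • p k) = ∑ k ∈ s, w k * φ (p k) :=
  le_antisymm (hφ.convexOn.map_sum_le hw₀ hw₁ fun _ _ ↦ trivial)
    (hφ.concaveOn.le_map_sum hw₀ hw₁ fun _ _ ↦ trivial)

end AffineOnLines

end

section

variable {n m : ℕ}

theorem dotp_eq_dotProduct (x y : Fin m → ℝ) : dotp x y = x ⬝ᵥ y := rfl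

theorem dotp_comm (x y : Fin m → ℝ) : dotp x y = dotp y x :=
  dotProduct_comm x y

theorem dotp_sum_smul_left {ι : Type*} (s : Finset ι) (w : ι → ℝ) (e : ι → Fin m → ℝ)
    (y : Fin m → ℝ) : dotp (∑ k ∈ s, w k • e k) y = ∑ k ∈ s, w k * dotp (e k) y := by
  simp only [dotp_eq_dotProduct, sum_dotProduct, smul_dotProduct, smul_eq_mul]

theorem affineOnLines_dotp_left (y : Fin m → ℝ) :
    AffineOnLines (fun x : Fin m → ℝ ↦ dotp x y) := by
  intro x x' t
  simp only [dotp_eq_dotProduct, add_dotProduct, smul_dotProduct, smul_eq_mul]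

theorem affineOnLines_pen_update (z : Fin n → Fin m → ℝ) (i : Fin n) :
    AffineOnLines (fun x ↦ pen (update z i x)) := by
  intro x y t
  simp only [pen, mul_sum, ← sum_add_distrib]
  refine sum_congr rfl fun a _ ↦ sum_congr rfl fun b _ ↦ ?_
  split_ifs with hab
  · rcases eq_or_ne a i with rfl | ha
    · simp only [update_self, update_of_ne hab.ne', affineOnLines_dotp_left _ x y t]
    · rcases eq_or_ne b i with rfl | hb
      · simp only [update_self, update_of_ne ha, dotp_comm (z a),
          affineOnLines_dotp_left _ x y t]
      · simp only [update_of_ne ha, update_of_ne hb]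
        ring
  · ring

theorem pen_eq_zero_of_orthogonal {z : Fin n → Fin m → ℝ}
    (h : ∀ j k, j ≠ k → dotp (z j) (z k) = 0) : pen z = 0 :=
  sum_eq_zero fun a _ ↦ sum_eq_zero fun b _ ↦ by
    split_ifs with hab
    exacts [h a b hab.ne, rfl]

section Optimality

variable {Om : Fin n → Set (Fin m → ℝ)} {f : (Fin n → Fin m → ℝ) → ℝ} {β : ℝ}

theorem InOmega.update {z : Fin n → Fin m → ℝ} (hz : InOmega Om z) {i : Fin n}
    {x : Fin m → ℝ} (hx : x ∈ Om i) : InOmega Om (update z i x) :=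
  (forall_update_iff z fun j y ↦ y ∈ Om j).2 ⟨hx, fun j _ ↦ hz j⟩

theorem Feas.pen_eq_zero {z : Fin n → Fin m → ℝ} (hz : Feas Om z) : pen z = 0 :=
  pen_eq_zero_of_orthogonal hz.2

theorem update_mem_SBeta_of_sum_eq (hf : MultiAffine f) {z : Fin n → Fin m → ℝ}
    (hz : z ∈ SBeta Om f β) {i : Fin n} {ι : Type*} [Fintype ι] {w : ι → ℝ}
    {e : ι → Fin m → ℝ} (hw₀ : ∀ k, 0 ≤ w k) (hw₁ : ∑ k, w k = 1) (he : ∀ k, e k ∈ Om i)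
    (hsum : ∑ k, w k • e k = z i) {k : ι} (hwk : w k ≠ 0) :
    update z i (e k) ∈ SBeta Om f β := by
  set φ : (Fin m → ℝ) → ℝ := fun x ↦ f (update z i x) + β * pen (update z i x)
  have hφ : AffineOnLines φ :=
    AffineOnLines.add (hf i z) ((affineOnLines_pen_update z i).const_mul β)
  have hφz : φ (z i) = f z + β * pen z := by simp only [φ, update_eq_self]
  have hle : ∀ k ∈ univ, φ (z i) ≤ φ (e k) := fun k _ ↦
    hφz ▸ hz.2 _ (hz.1.update (he k))
  have hφk : φ (e k) = φ (z i) :=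
    eq_of_sum_mul_eq_of_le (fun k _ ↦ hw₀ k) hw₁ hle
      (by rw [← hsum, hφ.map_sum (fun k _ ↦ hw₀ k) hw₁]) (mem_univ k) hwk
  exact ⟨hz.1.update (he k), fun v hv ↦ (hφk.trans hφz).trans_le (hz.2 v hv)⟩

theorem feas_of_feas_update {z : Fin n → Fin m → ℝ} (hz : InOmega Om z) {i : Fin n}
    {ι : Type*} [Fintype ι] {w : ι → ℝ} {e : ι → Fin m → ℝ} (hsum : ∑ k, w k • e k = z i)
    {k₀ : ι} (hwk₀ : w k₀ ≠ 0) (hfeas : ∀ k, w k ≠ 0 → Feas Om (update z i (e k))) :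
    Feas Om z := by
  have horth_i : ∀ j, j ≠ i → dotp (z i) (z j) = 0 := by
    intro j hj
    rw [← hsum, dotp_sum_smul_left]
    refine sum_eq_zero fun k _ ↦ ?_
    rcases eq_or_ne (w k) 0 with hwk | hwk
    · rw [hwk, zero_mul]
    · have h := (hfeas k hwk).2 i j hj.symm
      rw [update_self, update_of_ne hj] at h
      rw [h, mul_zero]
  refine ⟨hz, fun j l hjl ↦ ?_⟩
  rcases eq_or_ne j i with rfl | hj
  · exact horth_i l hjl.symm
  rcases eq_or_ne l i with rfl | hl
  · rw [dotp_comm]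
    exact horth_i j hj
  have h := (hfeas k₀ hwk₀).2 j l hjl
  rwa [update_of_ne hj, update_of_ne hl] at h

theorem mem_SOpt_of_mem_SBeta_of_feas {z z' : Fin n → Fin m → ℝ} (hz : z ∈ SBeta Om f β)
    (hfeas : Feas Om z) (hz' : z' ∈ SOpt Om f) : z ∈ SOpt Om f := by
  refine ⟨hfeas, fun v hv ↦ ?_⟩
  have h := hz.2 z' hz'.1.1
  rw [hfeas.pen_eq_zero, hz'.1.pen_eq_zero, mul_zero, add_zero, add_zero] at h
  exact h.trans (hz'.2 v hv)

end Optimality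

end

theorem one_nonextreme_block_optimal_general (n m : ℕ)
    (Om : Fin n → Set (Fin m → ℝ))
    (hcpt : ∀ i, IsCompact (Om i))
    (hcvx : ∀ i, Convex ℝ (Om i))
    (hfin : ∀ i, (Set.extremePoints ℝ (Om i)).Finite)
    (f : (Fin n → Fin m → ℝ) → ℝ) (hf : MultiAffine f)
    (β : ℝ)
    (hext : ∀ z ∈ SBeta Om f β, (∀ i, z i ∈ Set.extremePoints ℝ (Om i)) → z ∈ SOpt Om f)
    (zhat : Fin n → Fin m → ℝ) (hzhat : zhat ∈ SBeta Om f β)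
    (i : Fin n)
    (hothers : ∀ j, j ≠ i → zhat j ∈ Set.extremePoints ℝ (Om j)) :
    zhat ∈ SOpt Om f := by
  have hmem : zhat i ∈ convexHull ℝ (Set.extremePoints ℝ (Om i)) := by
    rw [convexHull_extremePoints_eq_of_finite (hcpt i) (hcvx i) (hfin i)]
    exact hzhat.1 i
  obtain ⟨ι, _, w, e, hw₀, hw₁, he, hsum⟩ := mem_convexHull_iff_exists_fintype.1 hmem
  have hopt : ∀ k, w k ≠ 0 → update zhat i (e k) ∈ SOpt Om f := fun k hwk ↦
    hext _ (update_mem_SBeta_of_sum_eq hf hzhat hw₀ hw₁ (fun k ↦ extremePoints_subset (he k))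
      hsum hwk) ((forall_update_iff zhat fun j x ↦ x ∈ Set.extremePoints ℝ (Om j)).2
        ⟨he k, hothers⟩)
  obtain ⟨k₀, -, hwk₀⟩ := exists_ne_zero_of_sum_ne_zero (hw₁.symm ▸ one_ne_zero)
  exact mem_SOpt_of_mem_SBeta_of_feas hzhat
    (feas_of_feas_update hzhat.1 hsum hwk₀ fun k hwk ↦ (hopt k hwk).1) (hopt k₀ hwk₀)

/-- **Lemma 3.4.** Suppose every extreme-point optimal solution of (P_β) is optimal
for (P). If `ẑ ∈ S_β^opt` has exactly one block that is not an extreme point of the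
corresponding `Ω_i⁺`, then `ẑ ∈ S^opt`. -/
theorem one_nonextreme_block_optimal (n m : ℕ) (hn : 2 ≤ n) (hm : 1 ≤ m)
    (Om : Fin n → Set (Fin m → ℝ))
    (hne : ∀ i, (Om i).Nonempty) (hcpt : ∀ i, IsCompact (Om i))
    (hcvx : ∀ i, Convex ℝ (Om i))
    (hnonneg : ∀ i, ∀ x ∈ Om i, ∀ k, 0 ≤ x k)
    (hfin : ∀ i, (Set.extremePoints ℝ (Om i)).Finite)
    (f : (Fin n → Fin m → ℝ) → ℝ) (hf : MultiAffine f) (hfc : Continuous f)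
    (hFne : ∃ z, Feas Om z)
    (β : ℝ)
    (hext : ∀ z ∈ SBeta Om f β, (∀ i, z i ∈ Set.extremePoints ℝ (Om i)) → z ∈ SOpt Om f)
    (zhat : Fin n → Fin m → ℝ) (hzhat : zhat ∈ SBeta Om f β)
    (i : Fin n) (hi : zhat i ∉ Set.extremePoints ℝ (Om i))
    (hothers : ∀ j, j ≠ i → zhat j ∈ Set.extremePoints ℝ (Om j)) :
    zhat ∈ SOpt Om f :=
  one_nonextreme_block_optimal_general n m Om hcpt hcvx hfin f hf β hext zhat hzhat i hothers
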